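/- Let r ≥ 1 and 0 ≤ i ≤ r. In the quotient ring A_r := ℂ[x, y, x_1, …, x_r, y_1, …, y_r]/(xy − x_1y_1, x_2y_2 − x_1y_1, …, x_ry_r − x_1y_1), the element P^r_i := ∏_{j=1}^{i}(y − y_j) · ∏_{j=i+1}^{r}(x − x_j) lies in the ideal generated by the two elements x_{i+1}·x_{i+2}⋯x_r and y_1·y_2⋯y_i (where an empty product equals 1). -/
import Mathlib


noncomputable section

open MvPolynomial

/-- The polynomial ring `ℂ[x, y, x₁, x₂, …, y₁, y₂, …]`: the variable `xᵥ j`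
(for `1 ≤ j ≤ r`) is `X (Sum.inl j)`, the variable `yᵥ j` is `X (Sum.inr (Sum.inl j))`,
and the two extra variables `x`, `y` are indexed by `Sum.inr (Sum.inr 0)` and
`Sum.inr (Sum.inr 1)`. -/
abbrev PolyR : Type := MvPolynomial (ℕ ⊕ ℕ ⊕ Fin 2) ℂ

/-- The variable `x_j`. -/
def xv (j : ℕ) : PolyR := X (Sum.inl j)

/-- The variable `y_j`. -/
def yv (j : ℕ) : PolyR := X (Sum.inr (Sum.inl j))

/-- The variable `x`. -/
def XX : PolyR := X (Sum.inr (Sum.inr 0))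

/-- The variable `y`. -/
def YY : PolyR := X (Sum.inr (Sum.inr 1))

/-- The ideal generated by `xy - x₁y₁` and `x_jy_j - x₁y₁` for `j = 2, …, r`
(the relations defining `A_r`). -/
def relIdeal (r : ℕ) : Ideal PolyR :=
  Ideal.span ({XX * YY - xv 1 * yv 1} ∪
    (fun j => xv j * yv j - xv 1 * yv 1) '' Set.Icc 2 r)

lemma rel_mem (r j : ℕ) (hj1 : 1 ≤ j) (hj2 : j ≤ r) :
    XX * YY - xv j * yv j ∈ relIdeal r := by
  rcases eq_or_lt_of_le hj1 with h | h
  · subst h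
    exact Ideal.subset_span (Or.inl rfl)
  · have h1 : XX * YY - xv 1 * yv 1 ∈ relIdeal r :=
      Ideal.subset_span (Or.inl rfl)
    have h2 : xv j * yv j - xv 1 * yv 1 ∈ relIdeal r :=
      Ideal.subset_span (Or.inr ⟨j, Set.mem_Icc.mpr ⟨h, hj2⟩, rfl⟩)
    have := sub_mem h1 h2
    simpa using this

lemma key (r j : ℕ) (hj : j ∈ Finset.Icc 1 r) :
    Ideal.Quotient.mk (relIdeal r) (XX * YY)
      = Ideal.Quotient.mk (relIdeal r) (xv j * yv j) := by
  rw [Ideal.Quotient.eq]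
  exact rel_mem r j (Finset.mem_Icc.mp hj).1 (Finset.mem_Icc.mp hj).2

lemma main_lemma (r : ℕ) : ∀ (n : ℕ) (I J : Finset ℕ), I.card + J.card ≤ n →
    I ⊆ Finset.Icc 1 r → J ⊆ Finset.Icc 1 r → Disjoint I J →
    Ideal.Quotient.mk (relIdeal r) ((∏ j ∈ I, (YY - yv j)) * ∏ j ∈ J, (XX - xv j)) ∈
      Ideal.span {Ideal.Quotient.mk (relIdeal r) (∏ j ∈ J, xv j),
        Ideal.Quotient.mk (relIdeal r) (∏ j ∈ I, yv j)} := by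
  intro n
  induction n with
  | zero =>
    intro I J hcard hI hJ hIJ
    have hI0 : I = ∅ := Finset.card_eq_zero.mp (by omega)
    subst hI0
    rw [Ideal.mem_span_pair]
    exact ⟨0, Ideal.Quotient.mk (relIdeal r) ((∏ j ∈ (∅ : Finset ℕ), (YY - yv j)) * ∏ j ∈ J, (XX - xv j)), by simp⟩
  | succ n ih =>
    intro I J hcard hI hJ hIJ
    rcases I.eq_empty_or_nonempty with rfl | ⟨a, ha⟩
    · rw [Ideal.mem_span_pair]
      exact ⟨0, Ideal.Quotient.mk (relIdeal r) ((∏ j ∈ (∅ : Finset ℕ), (YY - yv j)) * ∏ j ∈ J, (XX - xv j)), by simp⟩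
    rcases J.eq_empty_or_nonempty with rfl | ⟨b, hb⟩
    · rw [Ideal.mem_span_pair]
      exact ⟨Ideal.Quotient.mk (relIdeal r) ((∏ j ∈ I, (YY - yv j)) * ∏ j ∈ (∅ : Finset ℕ), (XX - xv j)), 0, by simp⟩
    -- main case
    set k := Ideal.Quotient.mk (relIdeal r) with hk
    set I' := I.erase a with hI'
    set J' := J.erase b with hJ'
    have haI' : a ∉ I' := Finset.notMem_erase a I
    have hbJ' : b ∉ J' := Finset.notMem_erase b J
    have hbI' : b ∉ I' := fun h => Finset.disjoint_left.mp hIJ (Finset.erase_subset a I h) hb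
    have hcI : 1 ≤ I.card := Finset.card_pos.mpr ⟨a, ha⟩
    have hcJ : 1 ≤ J.card := Finset.card_pos.mpr ⟨b, hb⟩
    have hcI' : I'.card = I.card - 1 := Finset.card_erase_of_mem ha
    have hcJ' : J'.card = J.card - 1 := Finset.card_erase_of_mem hb
    -- first recursion: (insert b I', J')
    have hrec1 := ih (insert b I') J'
      (by rw [Finset.card_insert_of_notMem hbI']; omega)
      (Finset.insert_subset (hJ hb) ((Finset.erase_subset a I).trans hI))
      ((Finset.erase_subset b J).trans hJ)
      (by
        rw [Finset.disjoint_insert_left]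
        exact ⟨hbJ', Finset.disjoint_of_subset_left (Finset.erase_subset a I)
          (Finset.disjoint_of_subset_right (Finset.erase_subset b J) hIJ)⟩)
    -- second recursion: (I', J)
    have hrec2 := ih I' J (by omega)
      ((Finset.erase_subset a I).trans hI) hJ
      (Finset.disjoint_of_subset_left (Finset.erase_subset a I) hIJ)
    -- product splittings (in PolyR)
    have hsI : ∏ j ∈ I, (YY - yv j) = (YY - yv a) * ∏ j ∈ I', (YY - yv j) :=
      (Finset.mul_prod_erase I _ ha).symm
    have hsJ : ∏ j ∈ J, (XX - xv j) = (XX - xv b) * ∏ j ∈ J', (XX - xv j) :=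
      (Finset.mul_prod_erase J _ hb).symm
    have hsyI : ∏ j ∈ I, yv j = yv a * ∏ j ∈ I', yv j :=
      (Finset.mul_prod_erase I _ ha).symm
    have hsxJ : ∏ j ∈ J, xv j = xv b * ∏ j ∈ J', xv j :=
      (Finset.mul_prod_erase J _ hb).symm
    have hsIb : ∏ j ∈ insert b I', (YY - yv j) = (YY - yv b) * ∏ j ∈ I', (YY - yv j) :=
      Finset.prod_insert hbI'
    have hsyIb : ∏ j ∈ insert b I', yv j = yv b * ∏ j ∈ I', yv j :=
      Finset.prod_insert hbI'
    -- key relations in the quotient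
    have hka := key r a (hI ha)
    have hkb := key r b (hJ hb)
    -- the main identity in PolyR modulo the ideal:
    have hpoly : (∏ j ∈ I, (YY - yv j)) * (∏ j ∈ J, (XX - xv j))
        + xv b * ((∏ j ∈ insert b I', (YY - yv j)) * ∏ j ∈ J', (XX - xv j))
        + yv a * ((∏ j ∈ I', (YY - yv j)) * ∏ j ∈ J, (XX - xv j))
        = ((∏ j ∈ I', (YY - yv j)) * (∏ j ∈ J', (XX - xv j))) * (XX * YY - xv b * yv b) := by
      rw [hsI, hsJ, hsIb]
      ring
    have hzero : k ((∏ j ∈ I, (YY - yv j)) * (∏ j ∈ J, (XX - xv j)))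
        = - (k (xv b) * k ((∏ j ∈ insert b I', (YY - yv j)) * ∏ j ∈ J', (XX - xv j)))
          - k (yv a) * k ((∏ j ∈ I', (YY - yv j)) * ∏ j ∈ J, (XX - xv j)) := by
      have h0 : k (XX * YY - xv b * yv b) = 0 := by
        rw [map_sub, hkb, sub_self]
      have h0' : k (XX * YY) - k (xv b * yv b) = 0 := by rw [← map_sub]; exact h0
      have hthis := congrArg k hpoly
      simp only [map_add, map_mul, map_sub] at hthis h0' ⊢
      linear_combination hthis + (k (∏ j ∈ I', (YY - yv j)) * k (∏ j ∈ J', (XX - xv j))) * h0'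
    -- extract span representations
    rw [Ideal.mem_span_pair] at hrec1 hrec2 ⊢
    obtain ⟨c1, c2, hc⟩ := hrec1
    obtain ⟨d1, d2, hd⟩ := hrec2
    refine ⟨-c1 - d1 * k (yv a), -(c2 * k (xv a)) - d2, ?_⟩
    have hxy : k (xv a) * k (yv a) = k (xv b) * k (yv b) := by
      rw [← map_mul, ← map_mul, ← hka, ← hkb]
    rw [hsxJ, map_mul] at hd
    rw [hzero, hsxJ, hsyI, map_mul, map_mul]
    rw [hsyIb, map_mul] at hc
    linear_combination (-(k (xv b))) * hc + (-(k (yv a))) * hd + (-c2 * k (∏ j ∈ I', yv j)) * hxy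

/-- in `A_r`, the element
`P^r_i = ∏_{j=1}^{i} (y - y_j) · ∏_{j=i+1}^{r} (x - x_j)` lies in the ideal generated by
`x_{i+1} ⋯ x_r` and `y_1 ⋯ y_i`. -/
theorem P_mem_span_prod (r i : ℕ) (hr : 1 ≤ r) (hi : i ≤ r) :
    Ideal.Quotient.mk (relIdeal r)
        ((∏ j ∈ Finset.Icc 1 i, (YY - yv j)) * ∏ j ∈ Finset.Icc (i + 1) r, (XX - xv j)) ∈
      Ideal.span {Ideal.Quotient.mk (relIdeal r) (∏ j ∈ Finset.Icc (i + 1) r, xv j),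
        Ideal.Quotient.mk (relIdeal r) (∏ j ∈ Finset.Icc 1 i, yv j)} := by
  refine main_lemma r ((Finset.Icc 1 i).card + (Finset.Icc (i + 1) r).card)
    (Finset.Icc 1 i) (Finset.Icc (i + 1) r) le_rfl ?_ ?_ ?_
  · intro j hj
    rw [Finset.mem_Icc] at hj ⊢
    omega
  · intro j hj
    rw [Finset.mem_Icc] at hj ⊢
    omega
  · rw [Finset.disjoint_left]
    intro j hj hj'
    rw [Finset.mem_Icc] at hj hj'
    omega

end
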